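/- Partial-measurement overlap formula: let E ⊆ E(𝓛) with Ē = E(𝓛) \ E, both nonempty and connected. Let Φ(x) = ∏_{e∈E} (α_e if x_e = 0, β_e if x_e = 1) be a product state on the qubits of E with α_e ≠ 0 for all e, and set w_e = β_e/α_e. Let ρ_E(x, x') = (1/|𝒵|) · #{y a 1-chain on Ē : x ⊕ y ∈ 𝒵 and x' ⊕ y ∈ 𝒵} be the partial-trace matrix, and define the doubled-lattice partition function Z(G_E ⊔ G_E^*) = ∑_{(x,x') ∈ 𝒵(E,∂E) × 𝒵(E,∂E), ∂x = ∂x'} (∏_{e : x_e = 1} w_e)(∏_{e : x'_e = 1} conj(w_e)). Then ⟨Φ|ρ_E|Φ⟩ = ∑_{x,x'} conj(Φ(x)) · ρ_E(x, x') · Φ(x') = (∏_{e∈E} |α_e|²) · Z(G_E ⊔ G_E^*) / (2^{|∂E| - 1} · |𝒵(E)|). -/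

import Mathlib

open Finset

/-- Edges of the L×L square lattice: `horiz i j` is the edge from (i,j) to (i+1,j),
`vert i j` is the edge from (i,j) to (i,j+1). -/
inductive Edge (L : ℕ) where
  | horiz : Fin L → Fin (L+1) → Edge L
  | vert  : Fin (L+1) → Fin L → Edge L
deriving DecidableEq, Fintype

/-- Vertices of the L×L square lattice. -/
abbrev Vertex (L : ℕ) := Fin (L+1) × Fin (L+1)

/-- The two endpoints of an edge. -/
def Edge.ends {L : ℕ} : Edge L → Vertex L × Vertex L
  | .horiz i j => ((i.castSucc, j), (i.succ, j))
  | .vert i j  => ((i, j.castSucc), (i, j.succ))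

/-- A vertex is incident to an edge iff it is one of its endpoints. -/
def Incident {L : ℕ} (s : Vertex L) (e : Edge L) : Prop :=
  s = e.ends.1 ∨ s = e.ends.2

instance {L : ℕ} (s : Vertex L) (e : Edge L) : Decidable (Incident s e) := by
  unfold Incident; infer_instance

/-- The star δs: the set of edges incident to a vertex s. -/
def star {L : ℕ} (s : Vertex L) : Finset (Edge L) :=
  Finset.univ.filter (fun e => Incident s e)

/-- The boundary ∂p of the plaquette p = (i,j): the four edges of the unit square
with corners (i,j), (i+1,j), (i,j+1), (i+1,j+1). -/
def pBoundary {L : ℕ} (p : Fin L × Fin L) : Finset (Edge L) :=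
  {Edge.horiz p.1 p.2.castSucc, Edge.horiz p.1 p.2.succ,
   Edge.vert p.1.castSucc p.2, Edge.vert p.1.succ p.2}


/-- The boundary of a 1-chain x : E(𝓛) → ZMod 2 is the 0-chain ∂x with
(∂x)_s = ∑_{e ∈ δs} x_e. -/
def bd {L : ℕ} (x : Edge L → ZMod 2) : Vertex L → ZMod 2 :=
  fun s => ∑ e ∈ star s, x e

/-- The restriction of a 1-chain to a subset E of edges, extended by zero. -/
def restrict {L : ℕ} (E : Finset (Edge L)) (x : Edge L → ZMod 2) : Edge L → ZMod 2 :=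
  fun e => if e ∈ E then x e else 0

/-- ∂E: the set of vertices incident both to an edge of E and to an edge of the
complement Ē = E(𝓛) \ E. -/
def bdryV {L : ℕ} (E : Finset (Edge L)) : Finset (Vertex L) :=
  Finset.univ.filter (fun s => (∃ e ∈ E, Incident s e) ∧ (∃ e ∈ Eᶜ, Incident s e))

/-- A relative 1-cycle on E with respect to a set B of vertices: a 1-chain supported on
E whose boundary vanishes outside B. `IsRelCycle E (bdryV E) x` says x ∈ 𝒵(E,∂E). -/
def IsRelCycle {L : ℕ} (E : Finset (Edge L)) (B : Finset (Vertex L))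
    (x : Edge L → ZMod 2) : Prop :=
  (∀ e ∉ E, x e = 0) ∧ ∀ s ∉ B, bd x s = 0

instance {L : ℕ} (E : Finset (Edge L)) (B : Finset (Vertex L)) (x : Edge L → ZMod 2) :
    Decidable (IsRelCycle E B x) := by
  unfold IsRelCycle; infer_instance

/-- Two edges share a vertex. -/
def SharesVertex {L : ℕ} (e e' : Edge L) : Prop :=
  ∃ s : Vertex L, Incident s e ∧ Incident s e'

/-- A set E of edges is connected iff any two of its edges are joined by a path of
edges of E in which consecutive edges share a vertex. -/
def EdgeConnected {L : ℕ} (E : Finset (Edge L)) : Prop :=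
  ∀ e ∈ E, ∀ e' ∈ E, ∃ (n : ℕ) (c : Fin (n + 1) → Edge L),
    c 0 = e ∧ c (Fin.last n) = e' ∧ (∀ i, c i ∈ E) ∧
    ∀ i : Fin n, SharesVertex (c i.castSucc) (c i.succ)

/-- x ⊕ y: the 1-chain agreeing with x on E and with y on Ē. -/
def combine {L : ℕ} (E : Finset (Edge L)) (x y : Edge L → ZMod 2) : Edge L → ZMod 2 :=
  fun e => if e ∈ E then x e else y e

/-- The partial-trace matrix ρ_E of the planar code state, indexed by 1-chains on E:
ρ_E(x,x') = (1/|𝒵|)·#{y a 1-chain on Ē : x ⊕ y ∈ 𝒵 and x' ⊕ y ∈ 𝒵}. -/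
noncomputable def rhoE {L : ℕ} (E : Finset (Edge L)) (x x' : Edge L → ZMod 2) : ℂ :=
  (Nat.card {y : Edge L → ZMod 2 //
      (∀ e ∈ E, y e = 0) ∧ bd (combine E x y) = 0 ∧ bd (combine E x' y) = 0} : ℂ) /
    (Nat.card {z : Edge L → ZMod 2 // bd z = 0} : ℂ)

/-- The product state Φ on the qubits of E: Φ(x) = ∏_{e∈E}(α_e if x_e = 0, β_e if x_e = 1). -/
noncomputable def prodState {L : ℕ} (E : Finset (Edge L)) (α β : Edge L → ℂ)
    (x : Edge L → ZMod 2) : ℂ :=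
  ∏ e ∈ E, (if x e = 0 then α e else β e)

/-- The weight of a 1-chain x: the product of w_e over the edges e with x_e = 1. -/
noncomputable def chainWeight {L : ℕ} (w : Edge L → ℂ) (x : Edge L → ZMod 2) : ℂ :=
  ∏ e ∈ Finset.univ.filter (fun e => x e = 1), w e

/-- The doubled-lattice partition function Z(G_E ⊔ G_E^*), with weights w_e = β_e/α_e:
the sum over pairs x, x' ∈ 𝒵(E,∂E) with ∂x = ∂x' of (∏_{x_e=1} w_e)·conj(∏_{x'_e=1} w_e). -/
noncomputable def Zdouble {L : ℕ} (E : Finset (Edge L)) (w : Edge L → ℂ) : ℂ :=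
  ∑ x ∈ Finset.univ.filter (fun x : Edge L → ZMod 2 => IsRelCycle E (bdryV E) x),
    ∑ x' ∈ Finset.univ.filter
        (fun x' : Edge L → ZMod 2 => IsRelCycle E (bdryV E) x' ∧ bd x' = bd x),
      chainWeight w x * (starRingEnd ℂ) (chainWeight w x')


section Helpers

variable {L : ℕ}

lemma zmod2_ne_one {a : ZMod 2} (h : a ≠ 1) : a = 0 := by revert a; decide

lemma zmod2_add_eq_zero {a b : ZMod 2} : a + b = 0 ↔ a = b := by revert a b; decide

lemma bd_add (x y : Edge L → ZMod 2) : bd (x + y) = bd x + bd y := by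
  funext s; simp [bd, Finset.sum_add_distrib]

lemma bd_zero : bd (0 : Edge L → ZMod 2) = 0 := by funext s; simp [bd]

lemma ends_ne (e : Edge L) : e.ends.1 ≠ e.ends.2 := by
  cases e with
  | horiz i j =>
      intro h
      exact (Fin.castSucc_lt_succ : i.castSucc < i.succ).ne (congrArg Prod.fst h)
  | vert i j =>
      intro h
      exact (Fin.castSucc_lt_succ : j.castSucc < j.succ).ne (congrArg Prod.snd h)

lemma mem_star {s : Vertex L} {e : Edge L} : e ∈ star s ↔ Incident s e := by
  change e ∈ Finset.univ.filter (fun e => Incident s e) ↔ _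
  simp

def ind (e0 : Edge L) : Edge L → ZMod 2 := fun e => if e = e0 then 1 else 0

lemma bd_ind (e0 : Edge L) (s : Vertex L) :
    bd (ind e0) s = if Incident s e0 then 1 else 0 := by
  unfold bd ind
  rw [Finset.sum_ite_eq' (star s) e0 (fun _ => (1 : ZMod 2))]
  simp [mem_star]

def dd (a b : Vertex L) : Vertex L → ZMod 2 :=
  fun s => (if s = a then 1 else 0) + (if s = b then 1 else 0)

lemma zmod2_ne_zero {a : ZMod 2} (h : a ≠ 0) : a = 1 := by revert a; decide

lemma dd_self (a : Vertex L) : dd a a = 0 := by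
  funext s
  by_cases h : s = a <;> simp only [dd, h, if_pos, if_neg, ite_true, ite_false, Pi.zero_apply] <;> decide

lemma dd_comm (a b : Vertex L) : dd a b = dd b a := by
  funext s; simp [dd, add_comm]

lemma bd_ind_eq_dd (e0 : Edge L) : bd (ind e0) = dd e0.ends.1 e0.ends.2 := by
  funext s
  rw [bd_ind]
  have hne := ends_ne e0
  unfold Incident dd
  by_cases h1 : s = e0.ends.1 <;> by_cases h2 : s = e0.ends.2 <;> simp_all

def Conn (E : Finset (Edge L)) (a b : Vertex L) : Prop :=
  ∃ x : Edge L → ZMod 2, (∀ e ∉ E, x e = 0) ∧ bd x = dd a b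

lemma conn_refl (E : Finset (Edge L)) (a : Vertex L) : Conn E a a :=
  ⟨0, fun _ _ => rfl, by rw [bd_zero, dd_self]⟩

lemma conn_symm {E : Finset (Edge L)} {a b : Vertex L} (h : Conn E a b) : Conn E b a := by
  obtain ⟨x, hs, hb⟩ := h
  exact ⟨x, hs, by rw [hb, dd_comm]⟩

lemma conn_trans {E : Finset (Edge L)} {a b c : Vertex L}
    (h1 : Conn E a b) (h2 : Conn E b c) : Conn E a c := by
  obtain ⟨x, hxs, hxb⟩ := h1
  obtain ⟨y, hys, hyb⟩ := h2
  refine ⟨x + y, fun e he => by simp [Pi.add_apply, hxs e he, hys e he], ?_⟩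
  rw [bd_add, hxb, hyb]
  funext s
  have : ∀ p q r : ZMod 2, (p + q) + (q + r) = p + r := by decide
  exact this _ _ _

lemma conn_edge {E : Finset (Edge L)} {e : Edge L} (he : e ∈ E) :
    Conn E e.ends.1 e.ends.2 := by
  refine ⟨ind e, fun e' he' => ?_, bd_ind_eq_dd e⟩
  unfold ind
  have : e' ≠ e := fun h => he' (h ▸ he)
  simp [this]

lemma conn_incident {E : Finset (Edge L)} {e : Edge L} {s : Vertex L}
    (he : e ∈ E) (hs : Incident s e) : Conn E s e.ends.1 := by
  rcases hs with h | h
  · exact h ▸ conn_refl E _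
  · exact h ▸ conn_symm (conn_edge he)

lemma conn_of_connected {E : Finset (Edge L)} (hE : EdgeConnected E)
    {e e' : Edge L} (he : e ∈ E) (he' : e' ∈ E) {s t : Vertex L}
    (hs : Incident s e) (ht : Incident t e') : Conn E s t := by
  obtain ⟨n, c, h0, hl, hmem, hadj⟩ := hE e he e' he'
  have key : ∀ i : Fin (n + 1), Conn E e.ends.1 (c i).ends.1 := by
    intro i
    induction i using Fin.induction with
    | zero => rw [h0]; exact conn_refl E _
    | succ i ih =>
        obtain ⟨v, hv1, hv2⟩ := hadj i
        exact conn_trans (conn_trans ih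
          (conn_symm (conn_incident (hmem i.castSucc) hv1)))
          (conn_incident (hmem i.succ) hv2)
  have h1 : Conn E s e.ends.1 := conn_incident he hs
  have h2 : Conn E e.ends.1 e'.ends.1 := by have := key (Fin.last n); rwa [hl] at this
  have h3 : Conn E e'.ends.1 t := conn_symm (conn_incident he' ht)
  exact conn_trans (conn_trans h1 h2) h3

lemma sum_eq_card (f : Vertex L → ZMod 2) :
    ∑ s, f s = ((Finset.univ.filter (fun s => f s = 1)).card : ZMod 2) := by
  rw [← Finset.sum_filter_add_sum_filter_not Finset.univ (fun s => f s = 1)]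
  have h2 : ∑ s ∈ Finset.univ.filter (fun s => ¬ f s = 1), f s = 0 :=
    Finset.sum_eq_zero (fun s hs => zmod2_ne_one (Finset.mem_filter.mp hs).2)
  have h1 : ∑ s ∈ Finset.univ.filter (fun s => f s = 1), f s
      = ((Finset.univ.filter (fun s => f s = 1)).card : ZMod 2) := by
    rw [Finset.sum_congr rfl (fun s hs => (Finset.mem_filter.mp hs).2),
      Finset.sum_const, nsmul_eq_mul, mul_one]
  rw [h1, h2, add_zero]

lemma exists_chain_aux (E : Finset (Edge L)) (hE : EdgeConnected E) :
    ∀ n (f : Vertex L → ZMod 2),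
      (Finset.univ.filter (fun s => f s = 1)).card ≤ n →
      (∀ s, f s ≠ 0 → ∃ e ∈ E, Incident s e) → (∑ s, f s = 0) →
      ∃ x, (∀ e ∉ E, x e = 0) ∧ bd x = f := by
  intro n
  induction n with
  | zero =>
      intro f hcard _ _
      have hall : ∀ s, f s = 0 := by
        intro s
        by_contra h
        have hs1 : f s = 1 := zmod2_ne_zero h
        have hmem : s ∈ Finset.univ.filter (fun s => f s = 1) := by simp [hs1]
        have := Finset.card_pos.mpr ⟨s, hmem⟩
        omega
      refine ⟨0, fun _ _ => rfl, ?_⟩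
      funext s
      rw [bd_zero]
      simp [hall s]
  | succ n ih =>
      intro f hcard hsupp heven
      by_cases hemp : (Finset.univ.filter (fun s => f s = 1)).card = 0
      · exact ih f (by omega) hsupp heven
      · have hpos : 0 < (Finset.univ.filter (fun s => f s = 1)).card := by omega
        obtain ⟨s, hsmem⟩ := Finset.card_pos.mp hpos
        have hfs : f s = 1 := (Finset.mem_filter.mp hsmem).2
        -- card is even, so ≥ 2
        have hcast : ((Finset.univ.filter (fun u => f u = 1)).card : ZMod 2) = 0 := by
          rw [← sum_eq_card]; exact heven
        have hcard2 : 2 ≤ (Finset.univ.filter (fun u => f u = 1)).card := by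
          rcases Nat.lt_or_ge (Finset.univ.filter (fun u => f u = 1)).card 2 with h | h
          · exfalso
            have h1 : (Finset.univ.filter (fun u => f u = 1)).card = 1 := by omega
            rw [h1] at hcast
            exact one_ne_zero hcast
          · exact h
        have : ((Finset.univ.filter (fun u => f u = 1)).erase s).Nonempty := by
          rw [← Finset.card_pos, Finset.card_erase_of_mem hsmem]; omega
        obtain ⟨t, htmem⟩ := this
        have hts : t ≠ s := (Finset.mem_erase.mp htmem).1
        have hft : f t = 1 := (Finset.mem_filter.mp (Finset.mem_erase.mp htmem).2).2
        obtain ⟨e, heE, hse⟩ := hsupp s (by rw [hfs]; exact one_ne_zero)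
        obtain ⟨e', he'E, hte⟩ := hsupp t (by rw [hft]; exact one_ne_zero)
        obtain ⟨x0, hx0s, hx0b⟩ := conn_of_connected hE heE he'E hse hte
        set f' : Vertex L → ZMod 2 := f + dd s t with hf'
        have hddst : ∀ u, u ≠ s → u ≠ t → dd s t u = 0 := by
          intro u hu1 hu2; simp [dd, hu1, hu2]
        have hf's : f' s = 0 := by
          simp only [hf', Pi.add_apply, dd, if_pos rfl, if_neg (fun h : s = t => hts h.symm),
            add_zero, hfs]
          decide
        have hf't : f' t = 0 := by
          simp only [hf', Pi.add_apply, dd, if_pos rfl, if_neg hts, zero_add, hft]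
          decide
        have hf'u : ∀ u, u ≠ s → u ≠ t → f' u = f u := by
          intro u h1 h2; simp [hf', Pi.add_apply, hddst u h1 h2]
        have hfilter : Finset.univ.filter (fun u => f' u = 1)
            = ((Finset.univ.filter (fun u => f u = 1)).erase s).erase t := by
          ext u
          simp only [Finset.mem_filter, Finset.mem_univ, true_and, Finset.mem_erase]
          constructor
          · intro hu
            have h1 : u ≠ s := fun h => by rw [h, hf's] at hu; exact one_ne_zero hu.symm
            have h2 : u ≠ t := fun h => by rw [h, hf't] at hu; exact one_ne_zero hu.symm
            exact ⟨h2, h1, by rw [← hf'u u h1 h2]; exact hu⟩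
          · rintro ⟨h2, h1, hu⟩
            rw [hf'u u h1 h2]; exact hu
        have hcard' : (Finset.univ.filter (fun u => f' u = 1)).card ≤ n := by
          rw [hfilter, Finset.card_erase_of_mem htmem,
            Finset.card_erase_of_mem hsmem]
          omega
        have hsupp' : ∀ u, f' u ≠ 0 → ∃ e ∈ E, Incident u e := by
          intro u hu
          have h1 : u ≠ s := fun h => hu (h ▸ hf's)
          have h2 : u ≠ t := fun h => hu (h ▸ hf't)
          exact hsupp u (by rwa [← hf'u u h1 h2])
        have heven' : ∑ u, f' u = 0 := by
          have hdds : ∑ u, dd s t u = 0 := by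
            unfold dd
            rw [Finset.sum_add_distrib, Finset.sum_ite_eq' Finset.univ s (fun _ => (1 : ZMod 2)),
              Finset.sum_ite_eq' Finset.univ t (fun _ => (1 : ZMod 2))]
            simp only [Finset.mem_univ, if_true]
            decide
          simp only [hf', Pi.add_apply]
          rw [Finset.sum_add_distrib, heven, hdds, add_zero]
        obtain ⟨x', hx's, hx'b⟩ := ih f' hcard' hsupp' heven'
        refine ⟨x0 + x', fun e he => by simp [Pi.add_apply, hx0s e he, hx's e he], ?_⟩
        rw [bd_add, hx0b, hx'b]
        funext u
        simp only [Pi.add_apply, hf']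
        have : ∀ p q : ZMod 2, p + (q + p) = q := by decide
        exact this _ _

lemma exists_chain (E : Finset (Edge L)) (hE : EdgeConnected E)
    (f : Vertex L → ZMod 2)
    (hsupp : ∀ s, f s ≠ 0 → ∃ e ∈ E, Incident s e) (heven : ∑ s, f s = 0) :
    ∃ x, (∀ e ∉ E, x e = 0) ∧ bd x = f :=
  exists_chain_aux E hE _ f le_rfl hsupp heven

end Helpers


section Helpers2

variable {L : ℕ}

lemma bd_eq_zero_of_no_incident {x : Edge L → ZMod 2} {s : Vertex L}
    (h : ∀ e, Incident s e → x e = 0) : bd x s = 0 :=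
  Finset.sum_eq_zero (fun e he => h e (mem_star.mp he))

lemma exists_incident_of_bd_ne_zero {x : Edge L → ZMod 2} {s : Vertex L}
    (h : bd x s ≠ 0) : ∃ e, Incident s e ∧ x e ≠ 0 := by
  by_contra hc
  push_neg at hc
  exact h (bd_eq_zero_of_no_incident (fun e he => hc e he))

lemma restrict_add_restrict_compl (E : Finset (Edge L)) (z : Edge L → ZMod 2) :
    _root_.restrict E z + _root_.restrict Eᶜ z = z := by
  funext e
  by_cases h : e ∈ E <;>
    simp [_root_.restrict, h, Finset.mem_compl]

lemma restrict_eq_self {E : Finset (Edge L)} {x : Edge L → ZMod 2}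
    (hx : ∀ e ∉ E, x e = 0) : _root_.restrict E x = x := by
  funext e
  by_cases h : e ∈ E <;> simp [_root_.restrict, h, hx e]

lemma zmod2_add_self (a : ZMod 2) : a + a = 0 := by revert a; decide

lemma sum_bd (x : Edge L → ZMod 2) : ∑ s, bd x s = 0 := by
  unfold bd
  have hthis : ∀ s : Vertex L, (∑ e ∈ star s, x e)
      = ∑ e : Edge L, if Incident s e then x e else 0 :=
    fun s => Finset.sum_filter (fun e => Incident s e) x
  simp_rw [hthis]
  rw [Finset.sum_comm]
  apply Finset.sum_eq_zero
  intro e _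
  rw [Finset.sum_ite, Finset.sum_const_zero, add_zero, Finset.sum_const]
  have hcardinc : (Finset.univ.filter (fun s : Vertex L => Incident s e)).card = 2 := by
    have h2 : Finset.univ.filter (fun s : Vertex L => Incident s e) = {e.ends.1, e.ends.2} := by
      ext s; rw [Finset.mem_filter]; simp [Incident, Finset.mem_insert]
    rw [h2, Finset.card_pair (ends_ne e)]
  rw [hcardinc, two_smul]
  exact zmod2_add_self _

lemma sol_card (E : Finset (Edge L)) (g : Vertex L → ZMod 2)
    (hsolv : ∃ y, (∀ e ∉ E, y e = 0) ∧ bd y = g) :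
    (Finset.univ.filter (fun y : Edge L → ZMod 2 => (∀ e ∉ E, y e = 0) ∧ bd y = g)).card
      = (Finset.univ.filter (fun y : Edge L → ZMod 2 => (∀ e ∉ E, y e = 0) ∧ bd y = 0)).card := by
  obtain ⟨y0, hy0s, hy0b⟩ := hsolv
  have haa : ∀ a b : ZMod 2, a + b + b = a := by decide
  apply Finset.card_nbij' (i := fun y => y + y0) (j := fun y => y + y0)
  · intro y hy
    rw [Finset.mem_coe, Finset.mem_filter] at hy ⊢
    obtain ⟨-, hys, hyb⟩ := hy
    refine ⟨Finset.mem_univ _, fun e he => by simp [Pi.add_apply, hys e he, hy0s e he], ?_⟩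
    rw [bd_add, hyb, hy0b]
    funext u
    exact zmod2_add_self _
  · intro y hy
    rw [Finset.mem_coe, Finset.mem_filter] at hy ⊢
    obtain ⟨-, hys, hyb⟩ := hy
    refine ⟨Finset.mem_univ _, fun e he => by simp [Pi.add_apply, hys e he, hy0s e he], ?_⟩
    rw [bd_add, hyb, hy0b, zero_add]
  · intro y _
    funext e
    exact haa (y e) (y0 e)
  · intro y _
    funext e
    exact haa (y e) (y0 e)

end Helpers2


section Helpers3

variable {L : ℕ}

lemma card_supported {V : Type*} [Fintype V] [DecidableEq V] (S : Finset V) :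
    (Finset.univ.filter (fun f : V → ZMod 2 => ∀ s ∉ S, f s = 0)).card = 2 ^ S.card := by
  have : (2 : ℕ) ^ S.card = Fintype.card (S → ZMod 2) := by
    rw [Fintype.card_fun, ZMod.card 2, Fintype.card_coe]
  rw [this, ← Finset.card_univ]
  apply Finset.card_nbij' (i := fun f (s : S) => f s.1)
    (j := fun g v => if h : v ∈ S then g ⟨v, h⟩ else 0)
  · intro f _
    exact Finset.mem_univ _
  · intro g _
    refine Finset.mem_filter.mpr ⟨Finset.mem_univ _, fun s hs => dif_neg hs⟩
  · intro f hf
    obtain ⟨-, hf⟩ := Finset.mem_filter.mp hf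
    funext v
    by_cases h : v ∈ S
    · simp [dif_pos h]
    · beta_reduce; rw [dif_neg h, hf v h]
  · intro g _
    funext s
    simp

lemma card_even (B : Finset (Vertex L)) (hB : B.Nonempty) :
    (Finset.univ.filter (fun f : Vertex L → ZMod 2 =>
      (∀ s ∉ B, f s = 0) ∧ ∑ s ∈ B, f s = 0)).card = 2 ^ (B.card - 1) := by
  obtain ⟨b, hb⟩ := hB
  rw [← Finset.card_erase_of_mem hb, ← card_supported (B.erase b)]
  apply Finset.card_nbij' (i := fun f => Function.update f b 0)
    (j := fun g => Function.update g b (∑ t ∈ B.erase b, g t))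
  · intro f hf
    obtain ⟨-, hfs, -⟩ := Finset.mem_filter.mp hf
    refine Finset.mem_filter.mpr ⟨Finset.mem_univ _, fun s hs => ?_⟩
    by_cases h : s = b
    · subst h; beta_reduce; rw [Function.update_self]
    · beta_reduce; rw [Function.update_of_ne h]
      exact hfs s (fun hsB => hs (Finset.mem_erase.mpr ⟨h, hsB⟩))
  · intro g hg
    obtain ⟨-, hgs⟩ := Finset.mem_filter.mp hg
    refine Finset.mem_filter.mpr ⟨Finset.mem_univ _, fun s hs => ?_, ?_⟩
    · have hsb : s ≠ b := fun h => hs (h ▸ hb)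
      beta_reduce; rw [Function.update_of_ne hsb]
      exact hgs s (fun hmem => hs (Finset.mem_of_mem_erase hmem))
    · beta_reduce; rw [Finset.sum_update_of_mem hb, ← Finset.erase_eq]
      exact zmod2_add_self _
  · intro f hf
    obtain ⟨-, hfs, hfe⟩ := Finset.mem_filter.mp hf
    have hsum : ∑ t ∈ B.erase b, Function.update f b 0 t = f b := by
      have h1 : ∑ t ∈ B.erase b, Function.update f b 0 t = ∑ t ∈ B.erase b, f t :=
        Finset.sum_congr rfl (fun t ht =>
          Function.update_of_ne (Finset.mem_erase.mp ht).1 _ _)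
      have h2 := Finset.add_sum_erase B f hb
      rw [hfe] at h2
      rw [h1, (zmod2_add_eq_zero.mp h2).symm]
    beta_reduce; rw [hsum, Function.update_idem, Function.update_eq_self]
  · intro g hg
    obtain ⟨-, hgs⟩ := Finset.mem_filter.mp hg
    have hgb : g b = 0 := hgs b (Finset.notMem_erase b B)
    beta_reduce; rw [Function.update_idem, ← hgb, Function.update_eq_self]

-- ## bdryV nonempty

lemma exists_incident (hL : 1 ≤ L) (s : Vertex L) : ∃ e : Edge L, Incident s e := by
  rcases Nat.lt_or_ge s.1.1 L with h | h
  · refine ⟨Edge.horiz ⟨s.1.1, h⟩ s.2, Or.inl ?_⟩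
    show s = (Fin.castSucc _, s.2)
    exact Prod.ext (Fin.ext rfl) rfl
  · have hs1 : s.1.1 = L := le_antisymm (Nat.lt_succ_iff.mp s.1.2) h
    refine ⟨Edge.horiz ⟨L - 1, by omega⟩ s.2, Or.inr ?_⟩
    show s = (Fin.succ _, s.2)
    refine Prod.ext (Fin.ext ?_) rfl
    show s.1.1 = L - 1 + 1
    omega

def GoodE (E : Finset (Edge L)) (s : Vertex L) : Prop := ∀ e, Incident s e → e ∈ E

lemma good_iff_of_edge {E : Finset (Edge L)}
    (H : ∀ s : Vertex L, GoodE E s ∨ ∀ e, Incident s e → e ∈ Eᶜ) (e : Edge L) :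
    GoodE E e.ends.1 ↔ GoodE E e.ends.2 := by
  have key : ∀ a b : Vertex L, Incident a e → Incident b e → GoodE E a → GoodE E b := by
    intro a b ha hb hg
    have heE : e ∈ E := hg e ha
    rcases H b with h | h
    · exact h
    · exact absurd (Finset.mem_compl.mp (h e hb)) (not_not.mpr heE)
  exact ⟨key _ _ (Or.inl rfl) (Or.inr rfl), key _ _ (Or.inr rfl) (Or.inl rfl)⟩

lemma good_row {E : Finset (Edge L)}
    (H : ∀ s : Vertex L, GoodE E s ∨ ∀ e, Incident s e → e ∈ Eᶜ)
    (j : Fin (L+1)) (i : Fin (L+1)) : GoodE E (i, j) ↔ GoodE E (0, j) := by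
  induction i using Fin.induction with
  | zero => exact Iff.rfl
  | succ i ih =>
      have h := good_iff_of_edge H (Edge.horiz i j)
      exact (h.symm.trans ih)

lemma good_col {E : Finset (Edge L)}
    (H : ∀ s : Vertex L, GoodE E s ∨ ∀ e, Incident s e → e ∈ Eᶜ)
    (j : Fin (L+1)) : GoodE E ((0 : Fin (L+1)), j) ↔ GoodE E (0, 0) := by
  induction j using Fin.induction with
  | zero => exact Iff.rfl
  | succ j ih =>
      have h := good_iff_of_edge H (Edge.vert 0 j)
      exact (h.symm.trans ih)

lemma good_all {E : Finset (Edge L)}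
    (H : ∀ s : Vertex L, GoodE E s ∨ ∀ e, Incident s e → e ∈ Eᶜ)
    (s t : Vertex L) : GoodE E s ↔ GoodE E t := by
  have hs' : GoodE E s ↔ GoodE E (0, 0) := (good_row H s.2 s.1).trans (good_col H s.2)
  have ht' : GoodE E t ↔ GoodE E (0, 0) := (good_row H t.2 t.1).trans (good_col H t.2)
  exact hs'.trans ht'.symm

lemma bdryV_nonempty (hL : 1 ≤ L) (E : Finset (Edge L))
    (hne : E.Nonempty) (hnec : Eᶜ.Nonempty) : (bdryV E).Nonempty := by
  by_contra h
  rw [Finset.not_nonempty_iff_eq_empty] at h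
  have H : ∀ s : Vertex L, GoodE E s ∨ ∀ e, Incident s e → e ∈ Eᶜ := by
    intro s
    have hs : s ∉ bdryV E := by rw [h]; exact Finset.notMem_empty s
    unfold bdryV at hs
    rw [Finset.mem_filter] at hs
    push_neg at hs
    rcases Decidable.em (∃ e ∈ E, Incident s e) with hA | hA
    · left
      intro e he
      by_contra hc
      exact hs (Finset.mem_univ s) hA e (Finset.mem_compl.mpr hc) he
    · right
      intro e he
      by_contra hc
      rw [Finset.mem_compl, not_not] at hc
      exact hA ⟨e, hc, he⟩
  obtain ⟨e0, he0⟩ := hne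
  obtain ⟨e1, he1⟩ := hnec
  have hg0 : GoodE E e0.ends.1 := by
    rcases H e0.ends.1 with hgood | hbad
    · exact hgood
    · exact absurd (Finset.mem_compl.mp (hbad e0 (Or.inl rfl))) (not_not.mpr he0)
  have hg1 : ¬ GoodE E e1.ends.1 := by
    intro hgood
    exact (Finset.mem_compl.mp he1) (hgood e1 (Or.inl rfl))
  exact hg1 ((good_all H e0.ends.1 e1.ends.1).mp hg0)

end Helpers3


section Helpers4

variable {L : ℕ}

lemma mem_bdryV_iff {E : Finset (Edge L)} {s : Vertex L} :
    s ∈ bdryV E ↔ (∃ e ∈ E, Incident s e) ∧ (∃ e ∈ Eᶜ, Incident s e) := by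
  unfold bdryV
  simp

lemma card_relcycles (E : Finset (Edge L)) (hB : (bdryV E).Nonempty)
    (hE : EdgeConnected E) :
    (Finset.univ.filter (fun x : Edge L → ZMod 2 => IsRelCycle E (bdryV E) x)).card
      = 2 ^ ((bdryV E).card - 1) *
        (Finset.univ.filter
          (fun x : Edge L → ZMod 2 => (∀ e ∉ E, x e = 0) ∧ bd x = 0)).card := by
  have hmemb : ∀ x ∈ Finset.univ.filter (fun x : Edge L → ZMod 2 => IsRelCycle E (bdryV E) x),
      bd x ∈ Finset.univ.filter (fun g : Vertex L → ZMod 2 =>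
        (∀ s ∉ bdryV E, g s = 0) ∧ ∑ s ∈ bdryV E, g s = 0) := by
    intro x hx
    obtain ⟨-, hxs, hxb⟩ := Finset.mem_filter.mp hx
    refine Finset.mem_filter.mpr ⟨Finset.mem_univ _, hxb, ?_⟩
    have hsub : ∑ s ∈ bdryV E, bd x s = ∑ s, bd x s :=
      Finset.sum_subset (Finset.subset_univ _) (fun s _ hs => hxb s hs)
    rw [hsub, sum_bd]
  rw [Finset.card_eq_sum_card_fiberwise hmemb]
  have hfib : ∀ g ∈ Finset.univ.filter (fun g : Vertex L → ZMod 2 =>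
        (∀ s ∉ bdryV E, g s = 0) ∧ ∑ s ∈ bdryV E, g s = 0),
      ((Finset.univ.filter (fun x : Edge L → ZMod 2 => IsRelCycle E (bdryV E) x)).filter
        (fun x => bd x = g)).card
      = (Finset.univ.filter
          (fun x : Edge L → ZMod 2 => (∀ e ∉ E, x e = 0) ∧ bd x = 0)).card := by
    intro g hg
    obtain ⟨-, hgs, hge⟩ := Finset.mem_filter.mp hg
    have hset : (Finset.univ.filter
          (fun x : Edge L → ZMod 2 => IsRelCycle E (bdryV E) x)).filter (fun x => bd x = g)
        = Finset.univ.filter (fun x : Edge L → ZMod 2 => (∀ e ∉ E, x e = 0) ∧ bd x = g) := by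
      ext x
      simp only [Finset.mem_filter, Finset.mem_univ, true_and]
      constructor
      · rintro ⟨⟨hs, -⟩, hbd⟩
        exact ⟨hs, hbd⟩
      · rintro ⟨hs, hbd⟩
        exact ⟨⟨hs, fun s hsB => by rw [hbd]; exact hgs s hsB⟩, hbd⟩
    rw [hset]
    apply sol_card
    apply exists_chain E hE g
    · intro s hsne
      have hsB : s ∈ bdryV E := by
        by_contra hc
        exact hsne (hgs s hc)
      exact (mem_bdryV_iff.mp hsB).1
    · rw [← Finset.sum_subset (Finset.subset_univ _) (fun s _ hs => hgs s hs)]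
      exact hge
  rw [Finset.sum_congr rfl hfib, Finset.sum_const, smul_eq_mul, card_even _ hB]

lemma card_zfull (E : Finset (Edge L)) (hEc : EdgeConnected Eᶜ) :
    (Finset.univ.filter (fun z : Edge L → ZMod 2 => bd z = 0)).card
      = (Finset.univ.filter (fun x : Edge L → ZMod 2 => IsRelCycle E (bdryV E) x)).card *
        (Finset.univ.filter
          (fun y : Edge L → ZMod 2 => (∀ e ∉ Eᶜ, y e = 0) ∧ bd y = 0)).card := by
  have hmemb : ∀ z ∈ Finset.univ.filter (fun z : Edge L → ZMod 2 => bd z = 0),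
      _root_.restrict E z ∈ Finset.univ.filter
        (fun x : Edge L → ZMod 2 => IsRelCycle E (bdryV E) x) := by
    intro z hz
    have hzb : bd z = 0 := (Finset.mem_filter.mp hz).2
    refine Finset.mem_filter.mpr ⟨Finset.mem_univ _, fun e he => by
      simp [_root_.restrict, he], ?_⟩
    intro s hs
    have hkey : bd (_root_.restrict E z) s = bd (_root_.restrict Eᶜ z) s := by
      have h0 : bd (_root_.restrict E z) + bd (_root_.restrict Eᶜ z) = 0 := by
        rw [← bd_add, restrict_add_restrict_compl, hzb]
      have := congrFun h0 s
      exact zmod2_add_eq_zero.mp this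
    rw [mem_bdryV_iff] at hs
    push_neg at hs
    rcases Decidable.em (∃ e ∈ E, Incident s e) with hA | hA
    · have hB := hs hA
      rw [hkey]
      apply bd_eq_zero_of_no_incident
      intro e he
      have heE : e ∉ Eᶜ := fun hc => hB e hc he
      simp [_root_.restrict, heE]
    · apply bd_eq_zero_of_no_incident
      intro e he
      have heE : e ∉ E := fun hc => hA ⟨e, hc, he⟩
      simp [_root_.restrict, heE]
  rw [Finset.card_eq_sum_card_fiberwise hmemb]
  have hfib : ∀ x ∈ Finset.univ.filter
      (fun x : Edge L → ZMod 2 => IsRelCycle E (bdryV E) x),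
      ((Finset.univ.filter (fun z : Edge L → ZMod 2 => bd z = 0)).filter
        (fun z => _root_.restrict E z = x)).card
      = (Finset.univ.filter
          (fun y : Edge L → ZMod 2 => (∀ e ∉ Eᶜ, y e = 0) ∧ bd y = 0)).card := by
    intro x hx
    obtain ⟨-, hxs, hxb⟩ := Finset.mem_filter.mp hx
    have hstep : ((Finset.univ.filter (fun z : Edge L → ZMod 2 => bd z = 0)).filter
        (fun z => _root_.restrict E z = x)).card
        = (Finset.univ.filter
            (fun y : Edge L → ZMod 2 => (∀ e ∉ Eᶜ, y e = 0) ∧ bd y = bd x)).card := by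
      apply Finset.card_nbij' (i := fun z => _root_.restrict Eᶜ z) (j := fun y => x + y)
      · intro z hz
        rw [Finset.mem_coe, Finset.mem_filter, Finset.mem_filter] at hz
        obtain ⟨⟨-, hzb⟩, hzr⟩ := hz
        refine Finset.mem_filter.mpr ⟨Finset.mem_univ _, fun e he => by
          simp [_root_.restrict, fun h : e ∈ Eᶜ => he h], ?_⟩
        have h0 : bd (_root_.restrict E z) + bd (_root_.restrict Eᶜ z) = 0 := by
          rw [← bd_add, restrict_add_restrict_compl, hzb]
        funext s
        have := zmod2_add_eq_zero.mp (congrFun h0 s)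
        rw [← this, hzr]
      · intro y hy
        rw [Finset.mem_coe, Finset.mem_filter] at hy
        obtain ⟨-, hys, hyb⟩ := hy
        rw [Finset.mem_coe, Finset.mem_filter, Finset.mem_filter]
        refine ⟨⟨Finset.mem_univ _, ?_⟩, ?_⟩
        · rw [bd_add, hyb]
          funext s
          exact zmod2_add_self _
        · funext e
          by_cases h : e ∈ E
          · have hyE : y e = 0 := hys e (fun hc => (Finset.mem_compl.mp hc) h)
            simp [_root_.restrict, h, Pi.add_apply, hyE]
          · simp [_root_.restrict, h, hxs e h]
      · intro z hz
        rw [Finset.mem_coe, Finset.mem_filter, Finset.mem_filter] at hz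
        obtain ⟨⟨-, -⟩, hzr⟩ := hz
        rw [← hzr]
        exact restrict_add_restrict_compl E z
      · intro y hy
        rw [Finset.mem_coe, Finset.mem_filter] at hy
        obtain ⟨-, hys, -⟩ := hy
        funext e
        by_cases h : e ∈ Eᶜ
        · have hxE : x e = 0 := hxs e (Finset.mem_compl.mp h)
          simp [_root_.restrict, h, Pi.add_apply, hxE]
        · simp [_root_.restrict, h, hys e h]
    rw [hstep]
    apply sol_card
    apply exists_chain Eᶜ hEc (bd x)
    · intro s hsne
      have hsB : s ∈ bdryV E := by
        by_contra hc
        exact hsne (hxb s hc)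
      exact (mem_bdryV_iff.mp hsB).2
    · exact sum_bd x
  rw [Finset.sum_congr rfl hfib, Finset.sum_const, smul_eq_mul]

end Helpers4


section Helpers5

variable {L : ℕ}

lemma combine_eq_add {E : Finset (Edge L)} {x y : Edge L → ZMod 2}
    (hx : ∀ e ∉ E, x e = 0) (hy : ∀ e ∈ E, y e = 0) :
    combine E x y = x + y := by
  funext e
  by_cases h : e ∈ E
  · simp [combine, h, hy e h]
  · simp [combine, h, hx e h]

lemma bd_add_eq_zero_iff {x y : Edge L → ZMod 2} :
    bd (x + y) = 0 ↔ bd y = bd x := by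
  rw [bd_add]
  constructor
  · intro h
    funext s
    exact (zmod2_add_eq_zero.mp (congrFun h s)).symm
  · intro h
    rw [h]
    funext s
    exact zmod2_add_self _

lemma rho_eval (E : Finset (Edge L)) (hEc : EdgeConnected Eᶜ)
    (x x' : Edge L → ZMod 2) (hx : ∀ e ∉ E, x e = 0) (hx' : ∀ e ∉ E, x' e = 0) :
    rhoE E x x'
      = if IsRelCycle E (bdryV E) x ∧ IsRelCycle E (bdryV E) x' ∧ bd x = bd x'
        then ((Finset.univ.filter
            (fun y : Edge L → ZMod 2 => (∀ e ∉ Eᶜ, y e = 0) ∧ bd y = 0)).card : ℂ) /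
          ((Finset.univ.filter (fun z : Edge L → ZMod 2 => bd z = 0)).card : ℂ)
        else 0 := by
  unfold rhoE
  have hnum : Nat.card {y : Edge L → ZMod 2 //
      (∀ e ∈ E, y e = 0) ∧ bd (combine E x y) = 0 ∧ bd (combine E x' y) = 0}
      = (Finset.univ.filter (fun y : Edge L → ZMod 2 =>
          (∀ e ∈ E, y e = 0) ∧ bd (combine E x y) = 0 ∧ bd (combine E x' y) = 0)).card := by
    rw [Nat.card_eq_fintype_card, Fintype.card_subtype]
  have hden : Nat.card {z : Edge L → ZMod 2 // bd z = 0}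
      = (Finset.univ.filter (fun z : Edge L → ZMod 2 => bd z = 0)).card := by
    rw [Nat.card_eq_fintype_card, Fintype.card_subtype]
  rw [hnum, hden]
  have hpred : Finset.univ.filter (fun y : Edge L → ZMod 2 =>
        (∀ e ∈ E, y e = 0) ∧ bd (combine E x y) = 0 ∧ bd (combine E x' y) = 0)
      = Finset.univ.filter (fun y : Edge L → ZMod 2 =>
        (∀ e ∈ E, y e = 0) ∧ bd y = bd x ∧ bd y = bd x') := by
    apply Finset.filter_congr
    intro y _
    constructor
    · rintro ⟨h0, h1, h2⟩
      rw [combine_eq_add hx h0, bd_add_eq_zero_iff] at h1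
      rw [combine_eq_add hx' h0, bd_add_eq_zero_iff] at h2
      exact ⟨h0, h1, h2⟩
    · rintro ⟨h0, h1, h2⟩
      rw [combine_eq_add hx h0, bd_add_eq_zero_iff, combine_eq_add hx' h0,
        bd_add_eq_zero_iff]
      exact ⟨h0, h1, h2⟩
  rw [hpred]
  by_cases hcond : IsRelCycle E (bdryV E) x ∧ IsRelCycle E (bdryV E) x' ∧ bd x = bd x'
  · rw [if_pos hcond]
    obtain ⟨hxRC, hx'RC, hbd⟩ := hcond
    have hset : Finset.univ.filter (fun y : Edge L → ZMod 2 =>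
          (∀ e ∈ E, y e = 0) ∧ bd y = bd x ∧ bd y = bd x')
        = Finset.univ.filter (fun y : Edge L → ZMod 2 =>
          (∀ e ∉ Eᶜ, y e = 0) ∧ bd y = bd x) := by
      ext y
      simp only [Finset.mem_filter, Finset.mem_univ, true_and]
      constructor
      · rintro ⟨h0, h1, -⟩
        exact ⟨fun e he => h0 e (by rwa [Finset.mem_compl, not_not] at he), h1⟩
      · rintro ⟨h0, h1⟩
        exact ⟨fun e he => h0 e (by rw [Finset.mem_compl]; exact not_not.mpr he),
          h1, by rw [h1, hbd]⟩
    rw [hset]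
    have hcount := sol_card Eᶜ (bd x) ?_
    · rw [hcount]
    · apply exists_chain Eᶜ hEc (bd x)
      · intro s hsne
        have hsB : s ∈ bdryV E := by
          by_contra hc
          exact hsne (hxRC.2 s hc)
        exact (mem_bdryV_iff.mp hsB).2
      · exact sum_bd x
  · rw [if_neg hcond]
    have hempty : Finset.univ.filter (fun y : Edge L → ZMod 2 =>
          (∀ e ∈ E, y e = 0) ∧ bd y = bd x ∧ bd y = bd x') = ∅ := by
      rw [Finset.eq_empty_iff_forall_notMem]
      intro y hy
      obtain ⟨-, h0, h1, h2⟩ := Finset.mem_filter.mp hy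
      apply hcond
      have hrc : ∀ (u : Edge L → ZMod 2), (∀ e ∉ E, u e = 0) → bd y = bd u →
          IsRelCycle E (bdryV E) u := by
        intro u hus hbu
        refine ⟨hus, fun s hs => ?_⟩
        rw [mem_bdryV_iff] at hs
        push_neg at hs
        rcases Decidable.em (∃ e ∈ E, Incident s e) with hA | hA
        · have hBc := hs hA
          rw [← hbu]
          apply bd_eq_zero_of_no_incident
          intro e he
          have heE : e ∈ E := by
            by_contra hc
            exact hBc e (Finset.mem_compl.mpr hc) he
          exact h0 e heE
        · apply bd_eq_zero_of_no_incident
          intro e he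
          have heE : e ∉ E := fun hc => hA ⟨e, hc, he⟩
          exact hus e heE
      exact ⟨hrc x hx h1, hrc x' hx' h2, by rw [← h1, h2]⟩
    rw [hempty]
    simp

lemma chainWeight_filter (E : Finset (Edge L)) (w : Edge L → ℂ) (x : Edge L → ZMod 2)
    (hx : ∀ e ∉ E, x e = 0) :
    chainWeight w x = ∏ e ∈ E, (if x e = 1 then w e else 1) := by
  unfold chainWeight
  rw [← Finset.prod_filter]
  congr 1
  ext e
  simp only [Finset.mem_filter, Finset.mem_univ, true_and]
  constructor
  · intro h
    refine ⟨?_, h⟩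
    by_contra hc
    rw [hx e hc] at h
    exact (by decide : (0 : ZMod 2) ≠ 1) h
  · exact fun h => h.2

lemma prodState_eq (E : Finset (Edge L)) (α β : Edge L → ℂ) (hα : ∀ e ∈ E, α e ≠ 0)
    (x : Edge L → ZMod 2) (hx : ∀ e ∉ E, x e = 0) :
    prodState E α β x = (∏ e ∈ E, α e) * chainWeight (fun e => β e / α e) x := by
  rw [chainWeight_filter E _ x hx]
  unfold prodState
  rw [← Finset.prod_mul_distrib]
  apply Finset.prod_congr rfl
  intro e he
  by_cases h : x e = 0
  · rw [if_pos h, if_neg (by rw [h]; decide), mul_one]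
  · have h1 : x e = 1 := zmod2_ne_zero h
    rw [if_neg h, if_pos h1, mul_comm, div_mul_cancel₀ _ (hα e he)]

end Helpers5

set_option maxHeartbeats 2000000 in
/-- partial-measurement overlap formula: if E and Ē are nonempty and
connected, Φ is a product state on the qubits of E with α_e ≠ 0 and w_e = β_e/α_e, then
⟨Φ|ρ_E|Φ⟩ = (∏_{e∈E}|α_e|²) · Z(G_E ⊔ G_E^*) / (2^{|∂E|-1}·|𝒵(E)|). -/
theorem partial_measurement_overlap (L : ℕ) (hL : 1 ≤ L)
    (E : Finset (Edge L)) (hne : E.Nonempty) (hnec : Eᶜ.Nonempty)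
    (hE : EdgeConnected E) (hEc : EdgeConnected Eᶜ)
    (α β : Edge L → ℂ) (hα : ∀ e ∈ E, α e ≠ 0) :
    (∑ x ∈ Finset.univ.filter (fun x : Edge L → ZMod 2 => ∀ e ∉ E, x e = 0),
      ∑ x' ∈ Finset.univ.filter (fun x' : Edge L → ZMod 2 => ∀ e ∉ E, x' e = 0),
        (starRingEnd ℂ) (prodState E α β x) * rhoE E x x' * prodState E α β x')
    = (∏ e ∈ E, (Complex.normSq (α e) : ℂ)) *
        Zdouble E (fun e => β e / α e) /
        ((2 : ℂ) ^ ((bdryV E).card - 1) *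
          (Nat.card {z : Edge L → ZMod 2 // (∀ e ∉ E, z e = 0) ∧ bd z = 0} : ℂ)) := by
  classical
  have hB : (bdryV E).Nonempty := bdryV_nonempty hL E hne hnec
  -- abbreviations (plain, no `set`)
  have hNZE : (Nat.card {z : Edge L → ZMod 2 // (∀ e ∉ E, z e = 0) ∧ bd z = 0})
      = (Finset.univ.filter
        (fun z : Edge L → ZMod 2 => (∀ e ∉ E, z e = 0) ∧ bd z = 0)).card := by
    rw [Nat.card_eq_fintype_card, Fintype.card_subtype]
  -- step 1: rewrite the summand using rho_eval
  have step1 : (∑ x ∈ Finset.univ.filter (fun x : Edge L → ZMod 2 => ∀ e ∉ E, x e = 0),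
      ∑ x' ∈ Finset.univ.filter (fun x' : Edge L → ZMod 2 => ∀ e ∉ E, x' e = 0),
        (starRingEnd ℂ) (prodState E α β x) * rhoE E x x' * prodState E α β x')
      = ∑ x ∈ Finset.univ.filter (fun x : Edge L → ZMod 2 => ∀ e ∉ E, x e = 0),
      ∑ x' ∈ Finset.univ.filter (fun x' : Edge L → ZMod 2 => ∀ e ∉ E, x' e = 0),
        (if IsRelCycle E (bdryV E) x ∧ IsRelCycle E (bdryV E) x' ∧ bd x = bd x' then
          (starRingEnd ℂ) (prodState E α β x) *
            (((Finset.univ.filter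
              (fun y : Edge L → ZMod 2 => (∀ e ∉ Eᶜ, y e = 0) ∧ bd y = 0)).card : ℂ) /
            ((Finset.univ.filter (fun z : Edge L → ZMod 2 => bd z = 0)).card : ℂ)) *
            prodState E α β x'
        else 0) := by
    apply Finset.sum_congr rfl
    intro x hx
    apply Finset.sum_congr rfl
    intro x' hx'
    rw [rho_eval E hEc x x' (Finset.mem_filter.mp hx).2 (Finset.mem_filter.mp hx').2,
      mul_ite, mul_zero, ite_mul, zero_mul]
  rw [step1]
  -- step 2: restrict the outer sum to relative cycles
  have hsub : Finset.univ.filter (fun x : Edge L → ZMod 2 => IsRelCycle E (bdryV E) x)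
      ⊆ Finset.univ.filter (fun x : Edge L → ZMod 2 => ∀ e ∉ E, x e = 0) := by
    intro x hx
    exact Finset.mem_filter.mpr ⟨Finset.mem_univ _, ((Finset.mem_filter.mp hx).2).1⟩
  rw [← Finset.sum_subset hsub (by
    intro x hx hxn
    apply Finset.sum_eq_zero
    intro x' _
    rw [if_neg]
    intro hc
    exact hxn (Finset.mem_filter.mpr ⟨Finset.mem_univ _, hc.1⟩))]
  -- step 3: inner sum over the matching filter
  have step3 : ∀ x ∈ Finset.univ.filter
      (fun x : Edge L → ZMod 2 => IsRelCycle E (bdryV E) x),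
      (∑ x' ∈ Finset.univ.filter (fun x' : Edge L → ZMod 2 => ∀ e ∉ E, x' e = 0),
        (if IsRelCycle E (bdryV E) x ∧ IsRelCycle E (bdryV E) x' ∧ bd x = bd x' then
          (starRingEnd ℂ) (prodState E α β x) *
            (((Finset.univ.filter
              (fun y : Edge L → ZMod 2 => (∀ e ∉ Eᶜ, y e = 0) ∧ bd y = 0)).card : ℂ) /
            ((Finset.univ.filter (fun z : Edge L → ZMod 2 => bd z = 0)).card : ℂ)) *
            prodState E α β x'
        else 0))
      = ∑ x' ∈ Finset.univ.filter
          (fun x' : Edge L → ZMod 2 => IsRelCycle E (bdryV E) x' ∧ bd x' = bd x),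
        (starRingEnd ℂ) (prodState E α β x) *
            (((Finset.univ.filter
              (fun y : Edge L → ZMod 2 => (∀ e ∉ Eᶜ, y e = 0) ∧ bd y = 0)).card : ℂ) /
            ((Finset.univ.filter (fun z : Edge L → ZMod 2 => bd z = 0)).card : ℂ)) *
            prodState E α β x' := by
    intro x hx
    have hxRC : IsRelCycle E (bdryV E) x := (Finset.mem_filter.mp hx).2
    rw [← Finset.sum_filter]
    apply Finset.sum_congr
    · ext x'
      simp only [Finset.mem_filter, Finset.mem_univ, true_and]
      constructor
      · rintro ⟨-, -, h2, h3⟩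
        exact ⟨h2, h3.symm⟩
      · rintro ⟨h2, h3⟩
        exact ⟨h2.1, hxRC, h2, h3.symm⟩
    · intro x' _
      rfl
  rw [Finset.sum_congr rfl step3]
  -- step 4: substitute the product state factorization
  have step4 : ∀ x ∈ Finset.univ.filter
      (fun x : Edge L → ZMod 2 => IsRelCycle E (bdryV E) x),
      (∑ x' ∈ Finset.univ.filter
          (fun x' : Edge L → ZMod 2 => IsRelCycle E (bdryV E) x' ∧ bd x' = bd x),
        (starRingEnd ℂ) (prodState E α β x) *
            (((Finset.univ.filter
              (fun y : Edge L → ZMod 2 => (∀ e ∉ Eᶜ, y e = 0) ∧ bd y = 0)).card : ℂ) /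
            ((Finset.univ.filter (fun z : Edge L → ZMod 2 => bd z = 0)).card : ℂ)) *
            prodState E α β x')
      = ∑ x' ∈ Finset.univ.filter
          (fun x' : Edge L → ZMod 2 => IsRelCycle E (bdryV E) x' ∧ bd x' = bd x),
        ((starRingEnd ℂ) (∏ e ∈ E, α e) * (∏ e ∈ E, α e) *
            (((Finset.univ.filter
              (fun y : Edge L → ZMod 2 => (∀ e ∉ Eᶜ, y e = 0) ∧ bd y = 0)).card : ℂ) /
            ((Finset.univ.filter (fun z : Edge L → ZMod 2 => bd z = 0)).card : ℂ))) *
          ((starRingEnd ℂ) (chainWeight (fun e => β e / α e) x) *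
            chainWeight (fun e => β e / α e) x') := by
    intro x hx
    have hxRC : IsRelCycle E (bdryV E) x := (Finset.mem_filter.mp hx).2
    apply Finset.sum_congr rfl
    intro x' hx'
    have hx'RC : IsRelCycle E (bdryV E) x' := ((Finset.mem_filter.mp hx').2).1
    rw [prodState_eq E α β hα x hxRC.1, prodState_eq E α β hα x' hx'RC.1, map_mul]
    ring
  rw [Finset.sum_congr rfl step4]
  -- step 5: pull out the constant and identify the double sum with Zdouble
  have step5 : (∑ x ∈ Finset.univ.filter
      (fun x : Edge L → ZMod 2 => IsRelCycle E (bdryV E) x),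
      ∑ x' ∈ Finset.univ.filter
          (fun x' : Edge L → ZMod 2 => IsRelCycle E (bdryV E) x' ∧ bd x' = bd x),
        ((starRingEnd ℂ) (∏ e ∈ E, α e) * (∏ e ∈ E, α e) *
            (((Finset.univ.filter
              (fun y : Edge L → ZMod 2 => (∀ e ∉ Eᶜ, y e = 0) ∧ bd y = 0)).card : ℂ) /
            ((Finset.univ.filter (fun z : Edge L → ZMod 2 => bd z = 0)).card : ℂ))) *
          ((starRingEnd ℂ) (chainWeight (fun e => β e / α e) x) *
            chainWeight (fun e => β e / α e) x'))
      = ((starRingEnd ℂ) (∏ e ∈ E, α e) * (∏ e ∈ E, α e) *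
            (((Finset.univ.filter
              (fun y : Edge L → ZMod 2 => (∀ e ∉ Eᶜ, y e = 0) ∧ bd y = 0)).card : ℂ) /
            ((Finset.univ.filter (fun z : Edge L → ZMod 2 => bd z = 0)).card : ℂ))) *
        ∑ x ∈ Finset.univ.filter
          (fun x : Edge L → ZMod 2 => IsRelCycle E (bdryV E) x),
        ∑ x' ∈ Finset.univ.filter
          (fun x' : Edge L → ZMod 2 => IsRelCycle E (bdryV E) x' ∧ bd x' = bd x),
          ((starRingEnd ℂ) (chainWeight (fun e => β e / α e) x) *
            chainWeight (fun e => β e / α e) x') := by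
    rw [Finset.mul_sum]
    apply Finset.sum_congr rfl
    intro x _
    rw [Finset.mul_sum]
  rw [step5]
  -- step 6: the double sum equals Zdouble
  have step6 : (∑ x ∈ Finset.univ.filter
          (fun x : Edge L → ZMod 2 => IsRelCycle E (bdryV E) x),
        ∑ x' ∈ Finset.univ.filter
          (fun x' : Edge L → ZMod 2 => IsRelCycle E (bdryV E) x' ∧ bd x' = bd x),
          ((starRingEnd ℂ) (chainWeight (fun e => β e / α e) x) *
            chainWeight (fun e => β e / α e) x'))
      = Zdouble E (fun e => β e / α e) := by
    unfold Zdouble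
    have hsym : ∀ (a b : Edge L → ZMod 2),
        a ∈ Finset.univ.filter (fun x : Edge L → ZMod 2 => IsRelCycle E (bdryV E) x) ∧
          b ∈ Finset.univ.filter (fun x' : Edge L → ZMod 2 =>
            IsRelCycle E (bdryV E) x' ∧ bd x' = bd a) ↔
        a ∈ Finset.univ.filter (fun x : Edge L → ZMod 2 =>
            IsRelCycle E (bdryV E) x ∧ bd x = bd b) ∧
          b ∈ Finset.univ.filter (fun x' : Edge L → ZMod 2 => IsRelCycle E (bdryV E) x') := by
      intro a b
      simp only [Finset.mem_filter, Finset.mem_univ, true_and]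
      constructor
      · rintro ⟨h1, h2, h3⟩
        exact ⟨⟨h1, h3.symm⟩, h2⟩
      · rintro ⟨⟨h1, h3⟩, h2⟩
        exact ⟨h1, h2, h3.symm⟩
    rw [Finset.sum_comm' hsym]
    apply Finset.sum_congr rfl
    intro x _
    apply Finset.sum_congr rfl
    intro x' _
    exact mul_comm _ _
  rw [step6]
  -- step 7: the numeric identity
  have hprodSq : (∏ e ∈ E, (Complex.normSq (α e) : ℂ))
      = (starRingEnd ℂ) (∏ e ∈ E, α e) * (∏ e ∈ E, α e) := by
    rw [map_prod, ← Finset.prod_mul_distrib]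
    apply Finset.prod_congr rfl
    intro e _
    rw [Complex.normSq_eq_conj_mul_self]
  rw [hNZE, ← hprodSq]
  -- cardinalities
  have hZEcne : (Finset.univ.filter
      (fun y : Edge L → ZMod 2 => (∀ e ∉ Eᶜ, y e = 0) ∧ bd y = 0)).card ≠ 0 :=
    Finset.card_ne_zero_of_mem
      (Finset.mem_filter.mpr ⟨Finset.mem_univ _, fun _ _ => rfl, bd_zero⟩)
  have hZEne : (Finset.univ.filter
      (fun z : Edge L → ZMod 2 => (∀ e ∉ E, z e = 0) ∧ bd z = 0)).card ≠ 0 :=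
    Finset.card_ne_zero_of_mem
      (Finset.mem_filter.mpr ⟨Finset.mem_univ _, fun _ _ => rfl, bd_zero⟩)
  have hcards : ((Finset.univ.filter (fun z : Edge L → ZMod 2 => bd z = 0)).card : ℂ)
      = (2 : ℂ) ^ ((bdryV E).card - 1) *
        ((Finset.univ.filter
          (fun z : Edge L → ZMod 2 => (∀ e ∉ E, z e = 0) ∧ bd z = 0)).card : ℂ) *
        ((Finset.univ.filter
          (fun y : Edge L → ZMod 2 => (∀ e ∉ Eᶜ, y e = 0) ∧ bd y = 0)).card : ℂ) := by
    have h1 := card_zfull E hEc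
    rw [card_relcycles E hB hE] at h1
    rw [h1]
    push_cast
    ring
  have h2ne : (2 : ℂ) ^ ((bdryV E).card - 1) ≠ 0 := pow_ne_zero _ two_ne_zero
  have hZEcne' : ((Finset.univ.filter
      (fun y : Edge L → ZMod 2 => (∀ e ∉ Eᶜ, y e = 0) ∧ bd y = 0)).card : ℂ) ≠ 0 :=
    Nat.cast_ne_zero.mpr hZEcne
  have hZEne' : ((Finset.univ.filter
      (fun z : Edge L → ZMod 2 => (∀ e ∉ E, z e = 0) ∧ bd z = 0)).card : ℂ) ≠ 0 :=
    Nat.cast_ne_zero.mpr hZEne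
  rw [hcards]
  have final : ∀ (P Zd c z : ℂ), c ≠ 0 → z ≠ 0 →
      P * (c / (z * c)) * Zd = P * Zd / z := by
    intro P Zd c z hc hz
    field_simp
  exact final _ _ _ _ hZEcne' (mul_ne_zero h2ne hZEne')
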